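/- arXiv:2003.03636 — 2 statements merged into one kernel-verified Lean document; each statement's English description precedes it below -/
import Mathlib

section
/- Under the assumptions of the previous statement (Hessian entries of log π bounded by M, refreshment rates γ_i > 0 with sum Γ), the velocity-switch transition probability Q(v'|x,v) = λ_{i}(x,v)/Λ(x,v), for v' = F_i(v) obtained by flipping the i-th coordinate of v, satisfies |Q(v'|x,v) − Q(v'|x',v)| ≤ 2 Γ^{−1} M d^{3/2} ‖x − x'‖_2 for all x, x' ∈ ℝ^d. -/
/-!
Each rate `lam j` is, up to the sign `v j = ±1`, a 1-Lipschitz function `t ↦ max 0 t + γ j` of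
the partial derivative `∂ⱼ log π`. The gradient of `∂ⱼ log π` has coordinates bounded by `M`,
hence Euclidean norm at most `√d M`, so by the mean value inequality every `lam j` is
`√d M`-Lipschitz and `Λ` is `d √d M`-Lipschitz. Since `Λ ≥ Γ` and `0 ≤ lam i ≤ Λ`, a quotient
`a / A` moves by at most `(|Δa| + |ΔA|) / Γ`, which gives `(1 + d) √d M / Γ ≤ 2 d^{3/2} M / Γ`.
-/

theorem OrthonormalBasis.norm_le_sqrt_card_mul_of_abs_apply_le {ι E : Type*} [Fintype ι]
    [NormedAddCommGroup E] [InnerProductSpace ℝ E] (b : OrthonormalBasis ι ℝ E)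
    (L : StrongDual ℝ E) {M : ℝ} (hM : ∀ j, |L (b j)| ≤ M) :
    ‖L‖ ≤ √(Fintype.card ι) * M := by
  rcases isEmpty_or_nonempty ι with hι | hι
  · have : Subsingleton E := b.repr.toEquiv.subsingleton
    simp [Subsingleton.elim L 0]
  have : FiniteDimensional ℝ E := Module.Finite.of_basis b.toBasis
  have : CompleteSpace E := FiniteDimensional.complete ℝ E
  set w := (InnerProductSpace.toDual ℝ E).symm L
  have hw : ∀ j, inner ℝ (b j) w = L (b j) := fun j => by
    rw [real_inner_comm, InnerProductSpace.toDual_symm_apply]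
  calc ‖L‖ = ‖w‖ := ((InnerProductSpace.toDual ℝ E).symm.norm_map L).symm
    _ ≤ √(Fintype.card ι) * ⨆ j, ‖inner ℝ (b j) w‖ := b.norm_le_card_mul_iSup_norm_inner w
    _ ≤ √(Fintype.card ι) * M := by
      gcongr
      exact ciSup_le fun j => by simpa [hw] using hM j

theorem abs_sub_le_sqrt_card_mul_of_abs_fderiv_apply_le {ι E : Type*} [Fintype ι]
    [NormedAddCommGroup E] [InnerProductSpace ℝ E] (b : OrthonormalBasis ι ℝ E)
    {g : E → ℝ} (hg : Differentiable ℝ g) {M : ℝ} (hM : ∀ y j, |fderiv ℝ g y (b j)| ≤ M)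
    (x x' : E) : |g x - g x'| ≤ √(Fintype.card ι) * M * ‖x - x'‖ :=
  Convex.norm_image_sub_le_of_norm_fderiv_le (fun y _ => hg y)
    (fun y _ => b.norm_le_sqrt_card_mul_of_abs_apply_le _ (hM y)) convex_univ
    (Set.mem_univ x') (Set.mem_univ x)

theorem abs_fderiv_single_sub_le_of_abs_hessian_le {ι : Type*} [Fintype ι] [DecidableEq ι]
    {f : EuclideanSpace ℝ ι → ℝ} (hf : ContDiff ℝ 2 f) {M : ℝ} (i : ι)
    (hM : ∀ y j, |fderiv ℝ (fun z => fderiv ℝ f z (EuclideanSpace.single i 1)) y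
      (EuclideanSpace.single j 1)| ≤ M) (x x' : EuclideanSpace ℝ ι) :
    |fderiv ℝ f x (EuclideanSpace.single i 1) - fderiv ℝ f x' (EuclideanSpace.single i 1)| ≤
      √(Fintype.card ι) * M * ‖x - x'‖ := by
  have hpartial : Differentiable ℝ fun z => fderiv ℝ f z (EuclideanSpace.single i 1) :=
    ((hf.fderiv_right le_rfl).differentiable one_ne_zero).clm_apply (differentiable_const _)
  exact abs_sub_le_sqrt_card_mul_of_abs_fderiv_apply_le (EuclideanSpace.basisFun ι ℝ) hpartial
    (fun y j => by simpa using hM y j) x x'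

theorem abs_max_zero_mul_sub_max_zero_mul_le {c : ℝ} (hc : |c| = 1) (a b : ℝ) :
    |max 0 (c * a) - max 0 (c * b)| ≤ |a - b| := by
  calc |max 0 (c * a) - max 0 (c * b)| ≤ |c * a - c * b| := by
        rw [max_comm 0, max_comm 0]; exact abs_max_sub_max_le_abs _ _ _
    _ = |a - b| := by rw [← mul_sub, abs_mul, hc, one_mul]

theorem abs_div_sub_div_le {a b A B Γ : ℝ} (hΓ : 0 < Γ) (hA : Γ ≤ A) (hB : Γ ≤ B) (hb : 0 ≤ b)
    (hbB : b ≤ B) : |a / A - b / B| ≤ (|a - b| + |A - B|) / Γ := by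
  have hA0 : 0 < A := hΓ.trans_le hA
  have hB0 : 0 < B := hΓ.trans_le hB
  calc |a / A - b / B| = |(a - b) / A + b / B * ((B - A) / A)| := by
        congr 1; field_simp; ring
    _ ≤ |(a - b) / A| + |b / B * ((B - A) / A)| := abs_add_le _ _
    _ = |a - b| / A + b / B * (|A - B| / A) := by
        rw [abs_mul, abs_div (a - b), abs_div (B - A), abs_of_pos hA0,
          abs_of_nonneg (div_nonneg hb hB0.le), abs_sub_comm B A]
    _ ≤ |a - b| / A + 1 * (|A - B| / A) := by gcongr; exact div_le_one_of_le₀ hbB hB0.le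
    _ ≤ (|a - b| + |A - B|) / Γ := by
        rw [one_mul, ← add_div]; exact div_le_div_of_nonneg_left (by positivity) hΓ hA

theorem abs_sum_sub_sum_le_card_mul {ι : Type*} (s : Finset ι) {f g : ι → ℝ} {L : ℝ}
    (h : ∀ j ∈ s, |f j - g j| ≤ L) : |∑ j ∈ s, f j - ∑ j ∈ s, g j| ≤ s.card * L := by
  rw [← Finset.sum_sub_distrib]
  exact (Finset.abs_sum_le_sum_abs _ _).trans (by simpa using Finset.sum_le_card_nsmul s _ _ h)

theorem jump_kernel_lipschitz_general {d : ℕ}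
    (π : EuclideanSpace ℝ (Fin d) → ℝ)
    (hsmooth : ContDiff ℝ 2 (fun x => Real.log (π x)))
    (M : ℝ)
    (hM : ∀ (x : EuclideanSpace ℝ (Fin d)) (i j : Fin d),
      |fderiv ℝ (fun y => fderiv ℝ (fun z => Real.log (π z)) y
          (EuclideanSpace.single i (1:ℝ))) x (EuclideanSpace.single j (1:ℝ))| ≤ M)
    (v : Fin d → ℝ) (hv : ∀ i, v i = 1 ∨ v i = -1)
    (γ : Fin d → ℝ) (hγ : ∀ i, 0 < γ i)
    (Γ : ℝ) (hΓ : Γ = ∑ i, γ i)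
    (lam : Fin d → EuclideanSpace ℝ (Fin d) → ℝ)
    (hlam : ∀ i x, lam i x =
      max 0 (-(v i) * fderiv ℝ (fun z => Real.log (π z)) x (EuclideanSpace.single i (1:ℝ)))
        + γ i)
    (Λ : EuclideanSpace ℝ (Fin d) → ℝ) (hΛ : ∀ x, Λ x = ∑ i, lam i x)
    (i : Fin d)
    (Q : EuclideanSpace ℝ (Fin d) → ℝ) (hQ : ∀ x, Q x = lam i x / Λ x)
    (x x' : EuclideanSpace ℝ (Fin d)) :
    |Q x - Q x'| ≤ 2 * Γ⁻¹ * M * (d : ℝ) ^ ((3:ℝ)/2) * ‖x - x'‖ := by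
  set L := √d * M * ‖x - x'‖
  have hM0 : 0 ≤ M := (abs_nonneg _).trans (hM x i i)
  have hγ_le_lam (j y) : γ j ≤ lam j y := by
    rw [hlam]; exact le_add_of_nonneg_left (le_max_left _ _)
  have hΓ_le_Λ (y) : Γ ≤ Λ y := hΓ ▸ hΛ y ▸ Finset.sum_le_sum fun j _ => hγ_le_lam j y
  have hlam_le_Λ (y) : lam i y ≤ Λ y := hΛ y ▸
    Finset.single_le_sum (fun j _ => (hγ j).le.trans (hγ_le_lam j y)) (Finset.mem_univ i)
  have hlam_sub (j) : |lam j x - lam j x'| ≤ L := by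
    have hv_abs : |-v j| = 1 := by rcases hv j with h | h <;> simp [h]
    rw [hlam, hlam, add_sub_add_right_eq_sub]
    refine (abs_max_zero_mul_sub_max_zero_mul_le hv_abs _ _).trans ?_
    simpa using abs_fderiv_single_sub_le_of_abs_hessian_le hsmooth j (hM · j) x x'
  have hΛ_sub : |Λ x - Λ x'| ≤ d * L := by
    simpa [hΛ] using abs_sum_sub_sum_le_card_mul Finset.univ fun j _ => hlam_sub j
  have hΓ0 : 0 < Γ := hΓ ▸ Finset.sum_pos (fun j _ => hγ j) ⟨i, Finset.mem_univ i⟩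
  have hd : (1 : ℝ) ≤ d := by exact_mod_cast i.pos
  calc |Q x - Q x'| ≤ (|lam i x - lam i x'| + |Λ x - Λ x'|) / Γ := by
        rw [hQ, hQ]
        exact abs_div_sub_div_le hΓ0 (hΓ_le_Λ x) (hΓ_le_Λ x') ((hγ i).le.trans (hγ_le_lam i x'))
          (hlam_le_Λ x')
    _ ≤ 2 * d * L / Γ := by gcongr; nlinarith [hlam_sub i, (by positivity : 0 ≤ L)]
    _ = 2 * Γ⁻¹ * M * (d : ℝ) ^ ((3:ℝ)/2) * ‖x - x'‖ := by
        rw [show (3:ℝ)/2 = 1/2 + 1 by norm_num, Real.rpow_add_one (by positivity),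
          ← Real.sqrt_eq_rpow]
        ring

/-- **Lemma 2: Lipschitz bound on the velocity-switch transition probabilities.**
Under the Hessian bound `M` on `log π` and refreshment rates `γ i > 0` summing to `Γ`,
the transition probability `Q(F_i v | x, v) = lam i x / Λ x` satisfies
`|Q(v'|x,v) - Q(v'|x',v)| ≤ 2 Γ⁻¹ M d^{3/2} ‖x - x'‖₂`. -/
theorem jump_kernel_lipschitz {d : ℕ}
    (π : EuclideanSpace ℝ (Fin d) → ℝ) (hπpos : ∀ x, 0 < π x)
    (hsmooth : ContDiff ℝ 2 (fun x => Real.log (π x)))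
    (M : ℝ)
    (hM : ∀ (x : EuclideanSpace ℝ (Fin d)) (i j : Fin d),
      |fderiv ℝ (fun y => fderiv ℝ (fun z => Real.log (π z)) y
          (EuclideanSpace.single i (1:ℝ))) x (EuclideanSpace.single j (1:ℝ))| ≤ M)
    (v : Fin d → ℝ) (hv : ∀ i, v i = 1 ∨ v i = -1)
    (γ : Fin d → ℝ) (hγ : ∀ i, 0 < γ i)
    (Γ : ℝ) (hΓ : Γ = ∑ i, γ i)
    (lam : Fin d → EuclideanSpace ℝ (Fin d) → ℝ)
    (hlam : ∀ i x, lam i x =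
      max 0 (-(v i) * fderiv ℝ (fun z => Real.log (π z)) x (EuclideanSpace.single i (1:ℝ)))
        + γ i)
    (Λ : EuclideanSpace ℝ (Fin d) → ℝ) (hΛ : ∀ x, Λ x = ∑ i, lam i x)
    (i : Fin d)
    (Q : EuclideanSpace ℝ (Fin d) → ℝ) (hQ : ∀ x, Q x = lam i x / Λ x)
    (x x' : EuclideanSpace ℝ (Fin d)) :
    |Q x - Q x'| ≤ 2 * Γ⁻¹ * M * (d : ℝ) ^ ((3:ℝ)/2) * ‖x - x'‖ :=
  jump_kernel_lipschitz_general π hsmooth M hM v hv γ hγ Γ hΓ lam hlam Λ hΛ i Q hQ x x'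
end

section
/- Define the interpolation operator 𝒥 acting on continuous functions f: ℝ^d × {−1,1}^d → ℝ by (𝒥f)(x, v, x', v') = (‖x' − x‖₂/‖v‖₂) ∫_0^1 f(x + t(x' − x), v) dt. Then for every bounded Lipschitz function f and every u₁ = (x₁, v₁, x₁', v₁'), u₂ = (x₂, v₂, x₂', v₂') with v₁, v₂ ∈ {−1,1}^d, it holds that |(𝒥f)(u₁) − (𝒥f)(u₂)| ≤ (1/√d) (|f|_Lip ‖x₁' − x₁‖₂ + ‖f‖_∞) ‖u₁ − u₂‖, where ‖u₁ − u₂‖ = ‖x₁ − x₂‖₂ + ‖x₁' − x₂'‖₂ + ‖v₁ − v₂‖₂ + ‖v₁' − v₂'‖₂ and the Lipschitz seminorm of f is taken with respect to the norm ‖(x,v)‖ = ‖x‖₂ + ‖v‖₂. -/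
open MeasureTheory

/-- The interpolation operator
`(𝒥 f)(x, v, x', v') = (‖x' − x‖₂/‖v‖₂) ∫_0^1 f(x + t(x' − x), v) dt`. -/
noncomputable def Jop {d : ℕ}
    (f : EuclideanSpace ℝ (Fin d) → EuclideanSpace ℝ (Fin d) → ℝ)
    (x v x' v' : EuclideanSpace ℝ (Fin d)) : ℝ :=
  (‖x' - x‖ / ‖v‖) * ∫ t in (0:ℝ)..1, f (x + t • (x' - x)) v

/-- **Lemma 5: pointwise bound for the interpolation operator.**
For `f` bounded by `Bf` and Lipschitz with constant `Lf` for the norm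
`‖(x,v)‖ = ‖x‖₂ + ‖v‖₂`, and velocities with coordinates in `{−1, 1}`,
`|(𝒥f)(u₁) − (𝒥f)(u₂)| ≤ (1/√d)(Lf ‖x₁' − x₁‖ + Bf) ‖u₁ − u₂‖`, where
`‖u₁ − u₂‖ = ‖x₁−x₂‖ + ‖x₁'−x₂'‖ + ‖v₁−v₂‖ + ‖v₁'−v₂'‖`. -/
theorem interpolation_operator_bound {d : ℕ} (hd : 0 < d)
    (f : EuclideanSpace ℝ (Fin d) → EuclideanSpace ℝ (Fin d) → ℝ)
    (hf : Continuous fun p : EuclideanSpace ℝ (Fin d) × EuclideanSpace ℝ (Fin d) =>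
      f p.1 p.2)
    (Lf Bf : ℝ)
    (hLip : ∀ x v y w, |f x v - f y w| ≤ Lf * (‖x - y‖ + ‖v - w‖))
    (hBdd : ∀ x v, |f x v| ≤ Bf)
    (x₁ v₁ x₁' v₁' x₂ v₂ x₂' v₂' : EuclideanSpace ℝ (Fin d))
    (hv₁ : ∀ i, v₁ i = 1 ∨ v₁ i = -1) (hv₂ : ∀ i, v₂ i = 1 ∨ v₂ i = -1) :
    |Jop f x₁ v₁ x₁' v₁' - Jop f x₂ v₂ x₂' v₂'| ≤
      (1 / Real.sqrt d) * (Lf * ‖x₁' - x₁‖ + Bf) *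
        (‖x₁ - x₂‖ + ‖x₁' - x₂'‖ + ‖v₁ - v₂‖ + ‖v₁' - v₂'‖) := by
  have hs : (0:ℝ) < Real.sqrt d := Real.sqrt_pos.2 (by exact_mod_cast hd)
  -- norms of velocities
  have hnorm : ∀ v : EuclideanSpace ℝ (Fin d), (∀ i, v i = 1 ∨ v i = -1) →
      ‖v‖ = Real.sqrt d := by
    intro v hv
    rw [EuclideanSpace.norm_eq]
    congr 1
    have h2 : ∀ i ∈ Finset.univ, ‖v i‖ ^ 2 = (1:ℝ) := by
      intro i _; rcases hv i with h | h <;> simp [h]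
    rw [Finset.sum_congr rfl h2]
    simp
  have hn1 : ‖v₁‖ = Real.sqrt d := hnorm v₁ hv₁
  have hn2 : ‖v₂‖ = Real.sqrt d := hnorm v₂ hv₂
  have hBf : 0 ≤ Bf := le_trans (abs_nonneg _) (hBdd 0 0)
  have hLf : 0 ≤ Lf := by
    have h := hLip (EuclideanSpace.single ⟨0, hd⟩ (1:ℝ)) 0 0 0
    have h1 : ‖EuclideanSpace.single (⟨0, hd⟩ : Fin d) (1:ℝ)‖ = 1 := by
      simp [EuclideanSpace.norm_single]
    rw [sub_zero, sub_zero, h1, norm_zero, add_zero, mul_one] at h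
    exact le_trans (abs_nonneg _) h
  set g₁ : ℝ → ℝ := fun t => f (x₁ + t • (x₁' - x₁)) v₁ with hg₁
  set g₂ : ℝ → ℝ := fun t => f (x₂ + t • (x₂' - x₂)) v₂ with hg₂
  have hc₁ : Continuous g₁ :=
    hf.comp ((by fun_prop : Continuous fun t : ℝ => x₁ + t • (x₁' - x₁)).prodMk
      continuous_const)
  have hc₂ : Continuous g₂ :=
    hf.comp ((by fun_prop : Continuous fun t : ℝ => x₂ + t • (x₂' - x₂)).prodMk
      continuous_const)
  have hint₁ : IntervalIntegrable g₁ MeasureTheory.volume 0 1 :=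
    hc₁.intervalIntegrable 0 1
  have hint₂ : IntervalIntegrable g₂ MeasureTheory.volume 0 1 :=
    hc₂.intervalIntegrable 0 1
  set I₁ : ℝ := ∫ t in (0:ℝ)..1, g₁ t with hI₁
  set I₂ : ℝ := ∫ t in (0:ℝ)..1, g₂ t with hI₂
  set D : ℝ := ‖x₁ - x₂‖ + ‖x₁' - x₂'‖ + ‖v₁ - v₂‖ with hD
  -- bound on I₂
  have hI2bdd : |I₂| ≤ Bf := by
    have := intervalIntegral.norm_integral_le_of_norm_le_const (C := Bf)
      (f := g₂) (a := 0) (b := 1) (fun t _ => by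
        simpa [g₂, Real.norm_eq_abs] using hBdd (x₂ + t • (x₂' - x₂)) v₂)
    simpa using this
  -- bound on I₁ - I₂
  have hdiff : |I₁ - I₂| ≤ Lf * D := by
    rw [hI₁, hI₂, ← intervalIntegral.integral_sub hint₁ hint₂]
    have := intervalIntegral.norm_integral_le_of_norm_le_const (C := Lf * D)
      (f := fun t => g₁ t - g₂ t) (a := 0) (b := 1) (fun t ht => by
        rw [Set.uIoc_of_le (by norm_num : (0:ℝ) ≤ 1)] at ht
        obtain ⟨ht0, ht1⟩ := ht
        have key : ‖(x₁ + t • (x₁' - x₁)) - (x₂ + t • (x₂' - x₂))‖ ≤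
            ‖x₁ - x₂‖ + ‖x₁' - x₂'‖ := by
          have heq : (x₁ + t • (x₁' - x₁)) - (x₂ + t • (x₂' - x₂)) =
              (1 - t) • (x₁ - x₂) + t • (x₁' - x₂') := by module
          rw [heq]
          calc ‖(1 - t) • (x₁ - x₂) + t • (x₁' - x₂')‖
              ≤ ‖(1 - t) • (x₁ - x₂)‖ + ‖t • (x₁' - x₂')‖ := norm_add_le _ _
            _ = (1 - t) * ‖x₁ - x₂‖ + t * ‖x₁' - x₂'‖ := by
                rw [norm_smul, norm_smul, Real.norm_of_nonneg (by linarith),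
                  Real.norm_of_nonneg (by linarith)]
            _ ≤ ‖x₁ - x₂‖ + ‖x₁' - x₂'‖ := by
                nlinarith [norm_nonneg (x₁ - x₂), norm_nonneg (x₁' - x₂')]
        calc ‖g₁ t - g₂ t‖ = |f (x₁ + t • (x₁' - x₁)) v₁ - f (x₂ + t • (x₂' - x₂)) v₂| := rfl
          _ ≤ Lf * (‖(x₁ + t • (x₁' - x₁)) - (x₂ + t • (x₂' - x₂))‖ + ‖v₁ - v₂‖) := hLip _ _ _ _
          _ ≤ Lf * D := by
              apply mul_le_mul_of_nonneg_left _ hLf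
              rw [hD]; linarith)
    simpa using this
  -- reverse triangle
  have hrev : |‖x₁' - x₁‖ - ‖x₂' - x₂‖| ≤ ‖x₁ - x₂‖ + ‖x₁' - x₂'‖ := by
    calc |‖x₁' - x₁‖ - ‖x₂' - x₂‖| ≤ ‖(x₁' - x₁) - (x₂' - x₂)‖ := abs_norm_sub_norm_le _ _
      _ = ‖(x₁' - x₂') - (x₁ - x₂)‖ := by congr 1; abel
      _ ≤ ‖x₁' - x₂'‖ + ‖x₁ - x₂‖ := norm_sub_le _ _
      _ = ‖x₁ - x₂‖ + ‖x₁' - x₂'‖ := by ring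
  have hdecomp : Jop f x₁ v₁ x₁' v₁' - Jop f x₂ v₂ x₂' v₂' =
      (‖x₁' - x₁‖ / Real.sqrt d) * (I₁ - I₂) +
      ((‖x₁' - x₁‖ - ‖x₂' - x₂‖) / Real.sqrt d) * I₂ := by
    rw [Jop, Jop, hn1, hn2]; ring
  rw [hdecomp]
  have hA : (0:ℝ) ≤ ‖x₁' - x₁‖ := norm_nonneg _
  calc |(‖x₁' - x₁‖ / Real.sqrt d) * (I₁ - I₂) +
        ((‖x₁' - x₁‖ - ‖x₂' - x₂‖) / Real.sqrt d) * I₂|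
      ≤ (‖x₁' - x₁‖ / Real.sqrt d) * |I₁ - I₂| +
        (|‖x₁' - x₁‖ - ‖x₂' - x₂‖| / Real.sqrt d) * |I₂| := by
        refine (abs_add_le _ _).trans ?_
        rw [abs_mul, abs_mul, abs_div, abs_div, abs_of_nonneg hA,
          abs_of_nonneg hs.le]
    _ ≤ (‖x₁' - x₁‖ / Real.sqrt d) * (Lf * D) +
        ((‖x₁ - x₂‖ + ‖x₁' - x₂'‖) / Real.sqrt d) * Bf := by
        gcongr
    _ ≤ (1 / Real.sqrt d) * (Lf * ‖x₁' - x₁‖ + Bf) *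
        (‖x₁ - x₂‖ + ‖x₁' - x₂'‖ + ‖v₁ - v₂‖ + ‖v₁' - v₂'‖) := by
        have heq : ‖x₁' - x₁‖ / Real.sqrt d * (Lf * D) +
            (‖x₁ - x₂‖ + ‖x₁' - x₂'‖) / Real.sqrt d * Bf =
            (1 / Real.sqrt d) * (‖x₁' - x₁‖ * (Lf * D) +
              (‖x₁ - x₂‖ + ‖x₁' - x₂'‖) * Bf) := by ring
        rw [heq, mul_assoc]
        apply mul_le_mul_of_nonneg_left _ (by positivity)
        have h1 : Lf * ‖x₁' - x₁‖ * D ≤ Lf * ‖x₁' - x₁‖ *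
            (‖x₁ - x₂‖ + ‖x₁' - x₂'‖ + ‖v₁ - v₂‖ + ‖v₁' - v₂'‖) := by
          apply mul_le_mul_of_nonneg_left _ (by positivity)
          rw [hD]
          linarith [norm_nonneg (v₁' - v₂')]
        have h2 : Bf * (‖x₁ - x₂‖ + ‖x₁' - x₂'‖) ≤ Bf *
            (‖x₁ - x₂‖ + ‖x₁' - x₂'‖ + ‖v₁ - v₂‖ + ‖v₁' - v₂'‖) := by
          apply mul_le_mul_of_nonneg_left _ hBf
          linarith [norm_nonneg (v₁ - v₂), norm_nonneg (v₁' - v₂')]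
        nlinarith [h1, h2]
end
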